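/- Fix a triangle-free graph G, a 7-assignment L for G, and L-colorings α and β of G. Suppose G contains a path v1 v2 v3 v4 v5 with d(v1) = d(v5) = 3 and d(v2) = d(v3) = d(v4) = 4, and let G''' := G − {v1, v2, v3, v4, v5}. If G''' has an L-recoloring sequence transforming the restriction of α to G''' into the restriction of β to G''' that recolors each vertex at most 30 times, then G has an L-recoloring sequence transforming α into β that recolors each vertex at most 30 times. -/

import Mathlib

variable {V : Type} [Fintype V] [DecidableEq V]

/-- Apply a list of recoloring steps (vertex, new color) to a coloring, one by one. -/
def applySteps (α : V → ℕ) : List (V × ℕ) → (V → ℕ)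
  | [] => α
  | q :: σ => applySteps (Function.update α q.1 q.2) σ

/-- `f` is a proper `L`-coloring of the subgraph of `G` induced on the vertex set `s`. -/
def ProperOn (G : SimpleGraph V) (L : V → Finset ℕ) (s : Set V) (f : V → ℕ) : Prop :=
  (∀ v ∈ s, f v ∈ L v) ∧ ∀ u ∈ s, ∀ v ∈ s, G.Adj u v → f u ≠ f v

/-- `σ` is an `L`-recoloring sequence for the subgraph of `G` induced on `s`,
starting from the coloring `α`: every step recolors a vertex of `s`, and every
intermediate coloring (including the initial and final ones) is a proper
`L`-coloring of the induced subgraph. -/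
def RecolSeqOn (G : SimpleGraph V) (L : V → Finset ℕ) (s : Set V) (α : V → ℕ)
    (σ : List (V × ℕ)) : Prop :=
  (∀ q ∈ σ, q.1 ∈ s) ∧ ∀ n ≤ σ.length, ProperOn G L s (applySteps α (σ.take n))

/-- The number of times the recoloring sequence `σ` recolors the vertex `v`. -/
def recolors (σ : List (V × ℕ)) (v : V) : ℕ :=
  σ.countP (fun q => decide (q.1 = v))

set_option linter.unusedSectionVars false
set_option linter.unnecessarySimpa false
set_option linter.unusedVariables false
set_option maxHeartbeats 1000000

/- ======================= auxiliary lemmas ======================= -/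

theorem applySteps_append (α : V → ℕ) (σ τ : List (V × ℕ)) :
    applySteps α (σ ++ τ) = applySteps (applySteps α σ) τ := by
  induction σ generalizing α with
  | nil => rfl
  | cons q σ ih => simp only [List.cons_append, applySteps]; exact ih _

theorem applySteps_congrOn (s : Set V) (σ : List (V × ℕ)) :
    ∀ (f f' : V → ℕ), (∀ u ∈ s, f u = f' u) → ∀ u ∈ s, applySteps f σ u = applySteps f' σ u := by
  induction σ with
  | nil => intro f f' h u hu; exact h u hu
  | cons q σ ih =>
    intro f f' h u hu
    refine ih _ _ ?_ u hu
    intro w hw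
    by_cases hwq : w = q.1 <;> simp [Function.update_apply, hwq, h w hw]

theorem ProperOn.congr {G : SimpleGraph V} {L : V → Finset ℕ} {s : Set V} {f f' : V → ℕ}
    (h : ProperOn G L s f) (he : ∀ u ∈ s, f u = f' u) : ProperOn G L s f' := by
  constructor
  · intro x hx; rw [← he x hx]; exact h.1 x hx
  · intro x hx y hy hadj; rw [← he x hx, ← he y hy]; exact h.2 x hx y hy hadj

theorem ProperOn.update (G : SimpleGraph V) (L : V → Finset ℕ) {s : Set V} {f : V → ℕ}
    (h : ProperOn G L s f) {w : V} {c : ℕ} (hw : w ∈ s) (hc : c ∈ L w)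
    (hnb : ∀ u ∈ s, G.Adj w u → c ≠ f u) :
    ProperOn G L s (Function.update f w c) := by
  constructor
  · intro x hx
    by_cases hxw : x = w
    · subst hxw; simpa using hc
    · simpa [Function.update_apply, hxw] using h.1 x hx
  · intro x hx y hy hadj
    by_cases hxw : x = w <;> by_cases hyw : y = w
    · subst hxw; subst hyw; exact absurd hadj (G.loopless.irrefl _)
    · subst hxw
      simp only [Function.update_apply, if_pos rfl, if_neg hyw, Function.update_self]
      exact hnb y hy hadj
    · subst hyw
      simp only [Function.update_apply, if_pos rfl, if_neg hxw, Function.update_self]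
      intro hh; exact hnb x hx hadj.symm hh.symm
    · simp only [Function.update_apply, if_neg hxw, if_neg hyw]
      exact h.2 x hx y hy hadj

theorem recolors_cons (q : V × ℕ) (σ : List (V × ℕ)) (u : V) :
    recolors (q :: σ) u = recolors σ u + if q.1 = u then 1 else 0 := by
  simp [recolors, List.countP_cons]

theorem recolors_nil (u : V) : recolors ([] : List (V × ℕ)) u = 0 := rfl

theorem recolors_append (σ τ : List (V × ℕ)) (u : V) :
    recolors (σ ++ τ) u = recolors σ u + recolors τ u := by
  simp [recolors, List.countP_append]

theorem countP_le_sum (T : Finset V) (p : V × ℕ → Bool) :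
    ∀ (σ : List (V × ℕ)), (∀ q ∈ σ, p q → q.1 ∈ T) → σ.countP p ≤ ∑ u ∈ T, recolors σ u := by
  intro σ
  induction σ with
  | nil => intro _; simp [recolors]
  | cons q σ ih =>
    intro h
    have hsum : ∑ u ∈ T, recolors (q :: σ) u
        = (∑ u ∈ T, recolors σ u) + (if q.1 ∈ T then 1 else 0) := by
      simp only [recolors_cons]
      rw [Finset.sum_add_distrib]
      congr 1
      simpa using Finset.sum_ite_eq T q.1 (fun _ => 1)
    rw [List.countP_cons, hsum]
    have hrest := ih (fun p hp hpp => h p (List.mem_cons_of_mem _ hp) hpp)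
    by_cases hq : p q
    · have : q.1 ∈ T := h q (List.mem_cons_self) hq
      simp [hq, this]; omega
    · simp [hq]; omega

/-- The potential of color `c` against the upcoming list `B` of recolorings of neighbors. -/
def Phi (k c : ℕ) (B : List (V × ℕ)) : ℕ :=
  if (B.dropWhile (fun q => decide (q.2 ≠ c))) = [] then 0
  else (B.dropWhile (fun q => decide (q.2 ≠ c))).length + (k - 1)

theorem dropWhile_cons_prop {α : Type*} (p : α → Bool) :
    ∀ (l : List α) (x : α) (t : List α), l.dropWhile p = x :: t → p x = false := by
  intro l
  induction l with
  | nil => intro x t h; simp at h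
  | cons a l ih =>
    intro x t h
    rw [List.dropWhile_cons] at h
    by_cases hpa : p a = true
    · rw [if_pos hpa] at h; exact ih x t h
    · rw [if_neg hpa] at h
      have hxa : x = a := (List.cons.injEq _ _ _ _ ▸ h).1.symm
      subst hxa
      exact Bool.not_eq_true _ ▸ hpa

theorem Phi_cons_ne {k c : ℕ} {q : V × ℕ} {B : List (V × ℕ)} (h : q.2 ≠ c) :
    Phi k c (q :: B) = Phi k c B := by
  have hd : (q :: B).dropWhile (fun q => decide (q.2 ≠ c)) = B.dropWhile (fun q => decide (q.2 ≠ c)) := by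
    rw [List.dropWhile_cons, if_pos (by simpa using h)]
  unfold Phi; rw [hd]

theorem Phi_cons_eq {k c : ℕ} (hk : 1 ≤ k) {q : V × ℕ} {B : List (V × ℕ)} (h : q.2 = c) :
    Phi k c (q :: B) = B.length + k := by
  have hd : (q :: B).dropWhile (fun q => decide (q.2 ≠ c)) = q :: B := by
    rw [List.dropWhile_cons, if_neg (by simp [h])]
  unfold Phi
  rw [hd, if_neg (List.cons_ne_nil _ _), List.length_cons]
  omega

theorem Phi_le (k c : ℕ) (B : List (V × ℕ)) : Phi k c B ≤ B.length + (k - 1) := by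
  unfold Phi
  split
  · omega
  · have h := List.takeWhile_append_dropWhile (p := fun q => decide (q.2 ≠ c)) (l := B)
    have := congrArg List.length h
    simp only [List.length_append] at this
    omega

theorem choice {k : ℕ} (hk : 1 ≤ k) (C : Finset ℕ) (hC : k ≤ C.card) (B : List (V × ℕ)) :
    ∃ c ∈ C, Phi k c B ≤ B.length := by
  by_cases hex : ∃ c ∈ C, B.dropWhile (fun q => decide (q.2 ≠ c)) = []
  · obtain ⟨c, hcC, hc⟩ := hex
    refine ⟨c, hcC, ?_⟩
    unfold Phi
    rw [if_pos hc]
    omega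
  · push_neg at hex
    set I : ℕ → ℕ := fun c => (B.takeWhile (fun q => decide (q.2 ≠ c))).length with hI
    have hlen : ∀ c, I c + (B.dropWhile (fun q => decide (q.2 ≠ c))).length = B.length := by
      intro c
      have h := List.takeWhile_append_dropWhile (p := fun q => decide (q.2 ≠ c)) (l := B)
      have h2 := congrArg List.length h
      rw [List.length_append] at h2
      exact h2
    have hfound : ∀ c ∈ C, I c < B.length := by
      intro c hc
      have h2 := hex c hc
      have h3 := hlen c
      have : 0 < (B.dropWhile (fun q => decide (q.2 ≠ c))).length := List.length_pos_iff.2 h2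
      omega
    have hinj : Set.InjOn I ↑C := by
      intro c1 h1 c2 h2 he
      have hd1 := (List.takeWhile_append_dropWhile (p := fun q => decide (q.2 ≠ c1)) (l := B)).symm
      have hd2 := (List.takeWhile_append_dropWhile (p := fun q => decide (q.2 ≠ c2)) (l := B)).symm
      have heq : B.takeWhile (fun q => decide (q.2 ≠ c1)) ++ B.dropWhile (fun q => decide (q.2 ≠ c1))
          = B.takeWhile (fun q => decide (q.2 ≠ c2)) ++ B.dropWhile (fun q => decide (q.2 ≠ c2)) := by
        rw [← hd1, ← hd2]
      have hdeq := (List.append_inj heq he).2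
      have hne1 := hex c1 h1
      obtain ⟨x, t, hxt⟩ := List.exists_cons_of_ne_nil hne1
      have hxt2 : B.dropWhile (fun q => decide (q.2 ≠ c2)) = x :: t := by rw [← hdeq, hxt]
      have e1 := dropWhile_cons_prop (fun q => decide (q.2 ≠ c1)) B x t hxt
      have e2 := dropWhile_cons_prop (fun q => decide (q.2 ≠ c2)) B x t hxt2
      simp only [decide_eq_false_iff_not, not_not] at e1 e2
      exact e1.symm.trans e2
    have hbig : ∃ c ∈ C, k - 1 ≤ I c := by
      by_contra hcon
      push_neg at hcon
      have hsub : C.image I ⊆ Finset.range (k - 1) := by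
        intro x hx
        obtain ⟨c, hc, rfl⟩ := Finset.mem_image.1 hx
        exact Finset.mem_range.2 (hcon c hc)
      have hcardim : (C.image I).card = C.card := Finset.card_image_of_injOn hinj
      have := Finset.card_le_card hsub
      rw [hcardim, Finset.card_range] at this
      omega
    obtain ⟨c, hcC, hidx⟩ := hbig
    refine ⟨c, hcC, ?_⟩
    have h2 := hex c hcC
    have h3 := hlen c
    have h4 := hfound c hcC
    unfold Phi
    rw [if_neg h2]
    omega

theorem go (G : SimpleGraph V) [DecidableRel G.Adj] (L : V → Finset ℕ)
    (s : Set V) (v : V) (hv : v ∉ s) (k : ℕ) (hk : 1 ≤ k)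
    (T : Finset V) (hT : ∀ u ∈ s, G.Adj v u → u ∈ T)
    (hcard : T.card + k + 1 ≤ (L v).card) :
    ∀ (ρ : List (V × ℕ)) (g : V → ℕ),
      ProperOn G L (insert v s) g →
      (∀ q ∈ ρ, q.1 ∈ s) →
      (∀ n ≤ ρ.length, ProperOn G L s (applySteps g (ρ.take n))) →
      ∃ σ : List (V × ℕ),
        (∀ q ∈ σ, q.1 ∈ insert v s) ∧
        (∀ n ≤ σ.length, ProperOn G L (insert v s) (applySteps g (σ.take n))) ∧
        (∀ u, u ≠ v → applySteps g σ u = applySteps g ρ u) ∧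
        (∀ u, u ≠ v → recolors σ u = recolors ρ u) ∧
        k * recolors σ v ≤ Phi k (g v) (ρ.filter (fun q => decide (G.Adj v q.1))) := by
  intro ρ
  induction ρ with
  | nil =>
    intro g hg _ _
    refine ⟨[], by simp, ?_, fun u _ => rfl, fun u _ => rfl, by simp [recolors_nil]⟩
    intro n hn
    have hn0 : n = 0 := Nat.le_zero.1 hn
    subst hn0
    exact hg
  | cons q ρ' ih =>
    intro g hg hsteps hprop
    have hq1s : q.1 ∈ s := hsteps q (List.mem_cons_self)
    have hq1v : q.1 ≠ v := fun h => hv (h ▸ hq1s)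
    have hP1 : ProperOn G L s (Function.update g q.1 q.2) := by
      have h := hprop 1 (by simp)
      simpa [applySteps] using h
    have hq2L : q.2 ∈ L q.1 := by
      have h := hP1.1 q.1 hq1s
      rwa [Function.update_self] at h
    have hq2nb : ∀ u ∈ s, G.Adj q.1 u → q.2 ≠ g u := by
      intro u hu hadj
      have hne : u ≠ q.1 := fun h => (G.loopless.irrefl q.1 (h ▸ hadj))
      have h2 := hP1.2 q.1 hq1s u hu hadj
      simpa [Function.update_apply, hne] using h2
    by_cases hconf : G.Adj v q.1 ∧ q.2 = g v
    · -- conflict case: recolor v first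
      obtain ⟨hadj, hcol⟩ := hconf
      have hq1T : q.1 ∈ T := hT q.1 hq1s hadj
      set F : Finset ℕ := insert q.2 (insert (g q.1) ((T.erase q.1).image g)) with hF
      have hFcard : F.card ≤ T.card + 1 := by
        have h1 : F.card ≤ ((T.erase q.1).image g).card + 2 := by
          refine le_trans (Finset.card_insert_le _ _) ?_
          have := Finset.card_insert_le (g q.1) ((T.erase q.1).image g)
          omega
        have h2 := Finset.card_image_le (s := T.erase q.1) (f := g)
        have h3 : (T.erase q.1).card = T.card - 1 := Finset.card_erase_of_mem hq1T
        have h4 : 1 ≤ T.card := Finset.card_pos.2 ⟨q.1, hq1T⟩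
        omega
      have hCcard : k ≤ (L v \ F).card := by
        have h1 := Finset.le_card_sdiff F (L v)
        omega
      obtain ⟨c, hcC, hcΦ⟩ := choice hk (L v \ F) hCcard (ρ'.filter (fun q => decide (G.Adj v q.1)))
      have hcL : c ∈ L v := (Finset.mem_sdiff.1 hcC).1
      have hcF : c ∉ F := (Finset.mem_sdiff.1 hcC).2
      have hcq2 : c ≠ q.2 := fun h => hcF (by rw [hF, h]; exact Finset.mem_insert_self _ _)
      have hcq1 : c ≠ g q.1 := fun h => hcF (by
        rw [hF, h]; exact Finset.mem_insert_of_mem (Finset.mem_insert_self _ _))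
      have hcnb : ∀ u ∈ s, G.Adj v u → c ≠ g u := by
        intro u hu hadj'
        by_cases hu1 : u = q.1
        · subst hu1; exact hcq1
        · intro h
          refine hcF ?_
          rw [hF]
          refine Finset.mem_insert_of_mem (Finset.mem_insert_of_mem ?_)
          exact Finset.mem_image.2 ⟨u, Finset.mem_erase.2 ⟨hu1, hT u hu hadj'⟩, h.symm⟩
      set g1 : V → ℕ := Function.update g v c with hg1
      set g2 : V → ℕ := Function.update g1 q.1 q.2 with hg2
      have hg1v : g1 v = c := by rw [hg1]; simp
      have hg2v : g2 v = c := by rw [hg2, Function.update_of_ne (Ne.symm hq1v), hg1v]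
      have hg1p : ProperOn G L (insert v s) g1 := by
        refine ProperOn.update G L hg (Set.mem_insert _ _) hcL ?_
        intro u hu hadj'
        rcases Set.mem_insert_iff.1 hu with h | h
        · exact absurd (h ▸ hadj') (G.loopless.irrefl v)
        · exact hcnb u h hadj'
      have hg1s : ∀ u, u ≠ v → g1 u = g u := fun u hu => Function.update_of_ne hu _ _
      have hg2p : ProperOn G L (insert v s) g2 := by
        refine ProperOn.update G L hg1p (Set.mem_insert_of_mem _ hq1s) hq2L ?_
        intro u hu hadj'
        rcases Set.mem_insert_iff.1 hu with h | h
        · subst h; rw [hg1v]; exact fun hh => hcq2 hh.symm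
        · rw [hg1s u (fun hh => hv (hh ▸ h))]
          exact hq2nb u h hadj'
      have hagree : ∀ u, u ≠ v → g2 u = Function.update g q.1 q.2 u := by
        intro u hu
        by_cases h1 : u = q.1
        · subst h1; rw [hg2]; simp
        · rw [hg2, Function.update_of_ne h1, hg1s u hu, Function.update_of_ne h1]
      have ihprop : ∀ n ≤ ρ'.length, ProperOn G L s (applySteps g2 (ρ'.take n)) := by
        intro n hn
        have h := hprop (n+1) (by simpa using Nat.succ_le_succ hn)
        rw [List.take_succ_cons] at h
        have h2 : ProperOn G L s (applySteps (Function.update g q.1 q.2) (ρ'.take n)) := h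
        refine h2.congr ?_
        refine applySteps_congrOn s _ _ _ ?_
        intro u hu
        exact (hagree u (fun hh => hv (hh ▸ hu))).symm
      obtain ⟨σr, hs1, hs2, hs3, hs4, hs5⟩ :=
        ih g2 hg2p (fun p hp => hsteps p (List.mem_cons_of_mem _ hp)) ihprop
      have happ : ∀ (τ : List (V × ℕ)), applySteps g ((v, c) :: q :: τ) = applySteps g2 τ := by
        intro τ; rfl
      refine ⟨(v, c) :: q :: σr, ?_, ?_, ?_, ?_, ?_⟩
      · intro p hp
        rcases List.mem_cons.1 hp with h | hp'
        · rw [h]; exact Set.mem_insert _ _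
        rcases List.mem_cons.1 hp' with h | hp''
        · rw [h]; exact Set.mem_insert_of_mem _ hq1s
        · exact hs1 p hp''
      · intro n hn
        match n with
        | 0 => exact hg
        | 1 =>
          have : applySteps g (((v, c) :: q :: σr).take 1) = g1 := rfl
          rw [this]; exact hg1p
        | (n+2) =>
          have : ((v, c) :: q :: σr).take (n+2) = (v, c) :: q :: σr.take n := rfl
          rw [this, happ]
          exact hs2 n (by simpa [List.length_cons] using hn)
      · intro u hu
        rw [happ, hs3 u hu]
        have h1 : applySteps g (q :: ρ') u = applySteps (Function.update g q.1 q.2) ρ' u := rfl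
        rw [h1]
        exact applySteps_congrOn {w : V | w ≠ v} ρ' g2 _ (fun w hw => hagree w hw) u hu
      · intro u hu
        rw [recolors_cons, recolors_cons, recolors_cons]
        have hvu : ¬ ((v, c).1 = u) := fun h => hu h.symm
        simp only [hvu, if_false]
        rw [hs4 u hu]
        omega
      · -- potential bound
        have hrv : recolors ((v, c) :: q :: σr) v = recolors σr v + 1 := by
          rw [recolors_cons, recolors_cons]
          simp [hq1v]
        have hfil : (q :: ρ').filter (fun p => decide (G.Adj v p.1))
            = q :: (ρ'.filter (fun p => decide (G.Adj v p.1))) :=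
          List.filter_cons_of_pos (by simpa using hadj)
        rw [hrv, hfil, Nat.mul_add, Nat.mul_one, Phi_cons_eq hk hcol]
        have h1 : k * recolors σr v ≤ Phi k c (ρ'.filter (fun p => decide (G.Adj v p.1))) := by
          rw [← hg2v]; exact hs5
        have h2 := le_trans h1 hcΦ
        omega
    · -- no conflict case
      set g' : V → ℕ := Function.update g q.1 q.2 with hg'
      have hg'v : g' v = g v := Function.update_of_ne (Ne.symm hq1v) _ _
      have hg'p : ProperOn G L (insert v s) g' := by
        refine ProperOn.update G L hg (Set.mem_insert_of_mem _ hq1s) hq2L ?_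
        intro u hu hadj'
        rcases Set.mem_insert_iff.1 hu with h | h
        · subst h
          intro hh
          exact hconf ⟨hadj'.symm, hh⟩
        · exact hq2nb u h hadj'
      have ihprop : ∀ n ≤ ρ'.length, ProperOn G L s (applySteps g' (ρ'.take n)) := by
        intro n hn
        have h := hprop (n+1) (by simpa using Nat.succ_le_succ hn)
        rw [List.take_succ_cons] at h
        exact h
      obtain ⟨σr, hs1, hs2, hs3, hs4, hs5⟩ :=
        ih g' hg'p (fun p hp => hsteps p (List.mem_cons_of_mem _ hp)) ihprop
      refine ⟨q :: σr, ?_, ?_, ?_, ?_, ?_⟩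
      · intro p hp
        rcases List.mem_cons.1 hp with h | hp'
        · rw [h]; exact Set.mem_insert_of_mem _ hq1s
        · exact hs1 p hp'
      · intro n hn
        match n with
        | 0 => exact hg
        | (n+1) =>
          rw [List.take_succ_cons]
          have : applySteps g (q :: σr.take n) = applySteps g' (σr.take n) := rfl
          rw [this]
          exact hs2 n (by simpa [List.length_cons] using hn)
      · intro u hu
        have h1 : applySteps g (q :: σr) u = applySteps g' σr u := rfl
        have h2 : applySteps g (q :: ρ') u = applySteps g' ρ' u := rfl
        rw [h1, h2]
        exact hs3 u hu
      · intro u hu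
        rw [recolors_cons, recolors_cons, hs4 u hu]
      · have hrv : recolors (q :: σr) v = recolors σr v := by
          rw [recolors_cons]; simp [hq1v]
        rw [hrv]
        by_cases hvadj : G.Adj v q.1
        · have hne : q.2 ≠ g v := fun h => hconf ⟨hvadj, h⟩
          have hfil : (q :: ρ').filter (fun p => decide (G.Adj v p.1))
              = q :: (ρ'.filter (fun p => decide (G.Adj v p.1))) :=
            List.filter_cons_of_pos (by simpa using hvadj)
          rw [hfil, Phi_cons_ne hne, ← hg'v]
          exact hs5
        · have hfil : (q :: ρ').filter (fun p => decide (G.Adj v p.1))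
              = ρ'.filter (fun p => decide (G.Adj v p.1)) :=
            List.filter_cons_of_neg (by simpa using hvadj)
          rw [hfil, ← hg'v]
          exact hs5

theorem insert_one (G : SimpleGraph V) [DecidableRel G.Adj] (L : V → Finset ℕ) (β : V → ℕ)
    (s : Set V) (v : V) (hv : v ∉ s) (k : ℕ) (hk : 1 ≤ k)
    (T : Finset V) (hT : ∀ u ∈ s, G.Adj v u → u ∈ T)
    (hcard : T.card + k + 1 ≤ (L v).card)
    (α : V → ℕ) (σ' : List (V × ℕ))
    (hα : ProperOn G L (insert v s) α)
    (h1 : ∀ q ∈ σ', q.1 ∈ s)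
    (h2 : ∀ n ≤ σ'.length, ProperOn G L s (applySteps α (σ'.take n)))
    (hβv : β v ∈ L v)
    (hβadj : ∀ u ∈ s, G.Adj v u → β v ≠ β u)
    (hend : ∀ u ∈ s, applySteps α σ' u = β u) :
    ∃ σ : List (V × ℕ),
      (∀ q ∈ σ, q.1 ∈ insert v s) ∧
      (∀ n ≤ σ.length, ProperOn G L (insert v s) (applySteps α (σ.take n))) ∧
      (∀ u ∈ insert v s, applySteps α σ u = β u) ∧
      (∀ u, u ≠ v → recolors σ u = recolors σ' u) ∧
      k * recolors σ v + 1 ≤ (∑ u ∈ T, recolors σ' u) + 2 * k := by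
  obtain ⟨σ0, g1, g2, g3, g4, g5⟩ := go G L s v hv k hk T hT hcard σ' α hα h1 h2
  have hΦle : Phi k (α v) (σ'.filter (fun q => decide (G.Adj v q.1)))
      ≤ (∑ u ∈ T, recolors σ' u) + (k - 1) := by
    have hlen : (σ'.filter (fun q => decide (G.Adj v q.1))).length
        = σ'.countP (fun q => decide (G.Adj v q.1)) :=
      List.countP_eq_length_filter.symm
    have hc : σ'.countP (fun q => decide (G.Adj v q.1)) ≤ ∑ u ∈ T, recolors σ' u := by
      refine countP_le_sum T _ σ' ?_
      intro q hq hpq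
      exact hT q.1 (h1 q hq) (by simpa using hpq)
    have hp := Phi_le k (α v) (σ'.filter (fun q => decide (G.Adj v q.1)))
    omega
  have hγ : ProperOn G L (insert v s) (applySteps α σ0) := by
    have h := g2 σ0.length le_rfl
    rwa [List.take_length] at h
  have hends : ∀ u ∈ s, applySteps α σ0 u = β u := by
    intro u hu
    rw [g3 u (fun h => hv (h ▸ hu))]
    exact hend u hu
  have hbound0 : k * recolors σ0 v ≤ (∑ u ∈ T, recolors σ' u) + (k - 1) :=
    le_trans g5 hΦle
  by_cases hfin : applySteps α σ0 v = β v
  · refine ⟨σ0, g1, g2, ?_, g4, ?_⟩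
    · intro u hu
      rcases Set.mem_insert_iff.1 hu with h | h
      · rw [h]; exact hfin
      · exact hends u h
    · set K := k * recolors σ0 v with hK
      omega
  · refine ⟨σ0 ++ [(v, β v)], ?_, ?_, ?_, ?_, ?_⟩
    · intro p hp
      rcases List.mem_append.1 hp with h | h
      · exact g1 p h
      · have : p = (v, β v) := by simpa using h
        rw [this]; exact Set.mem_insert _ _
    · intro n hn
      by_cases hn' : n ≤ σ0.length
      · rw [List.take_append_of_le_length hn']
        exact g2 n hn'
      · have hn2 : σ0.length + 1 ≤ n := by omega
        rw [List.take_of_length_le (by simpa using hn2)]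
        rw [applySteps_append]
        have heq : applySteps (applySteps α σ0) [(v, β v)]
            = Function.update (applySteps α σ0) v (β v) := rfl
        rw [heq]
        refine ProperOn.update G L hγ (Set.mem_insert _ _) hβv ?_
        intro u hu hadj
        rcases Set.mem_insert_iff.1 hu with h | h
        · exact absurd (h ▸ hadj) (G.loopless.irrefl v)
        · rw [hends u h]
          exact hβadj u h hadj
    · intro u hu
      rw [applySteps_append]
      have heq : applySteps (applySteps α σ0) [(v, β v)] u
          = Function.update (applySteps α σ0) v (β v) u := rfl
      rw [heq]
      rcases Set.mem_insert_iff.1 hu with h | h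
      · rw [h, Function.update_self]
      · have huv : u ≠ v := fun hh => hv (hh ▸ h)
        rw [Function.update_of_ne huv]
        exact hends u h
    · intro u hu
      rw [recolors_append]
      have : recolors [(v, β v)] u = 0 := by
        rw [recolors_cons, recolors_nil]
        simp [Ne.symm hu]
      rw [this, Nat.add_zero]
      exact g4 u hu
    · have hr : recolors (σ0 ++ [(v, β v)]) v = recolors σ0 v + 1 := by
        rw [recolors_append, recolors_cons, recolors_nil]
        simp
      rw [hr, Nat.mul_add, Nat.mul_one]
      set K := k * recolors σ0 v with hK
      omega


/-- Fix a triangle-free graph `G`, a 7-assignment `L`, and `L`-colorings `α`, `β`.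
Suppose `G` contains a path `v₁v₂v₃v₄v₅` with `d(v₁) = d(v₅) = 3` and
`d(v₂) = d(v₃) = d(v₄) = 4`, and let `G''' := G − {v₁, v₂, v₃, v₄, v₅}`.  If
`G'''` has a 30-good `L`-recoloring sequence transforming `α↾G'''` into `β↾G'''`,
then `G` has a 30-good `L`-recoloring sequence transforming `α` into `β`. -/
theorem reducible_path_3_4_4_4_3 (G : SimpleGraph V) [DecidableRel G.Adj]
    (htf : G.CliqueFree 3)
    (L : V → Finset ℕ) (hL : ∀ v, (L v).card = 7)
    (α β : V → ℕ)
    (hα : ProperOn G L Set.univ α) (hβ : ProperOn G L Set.univ β)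
    (v₁ v₂ v₃ v₄ v₅ : V)
    (ha1 : G.Adj v₁ v₂) (ha2 : G.Adj v₂ v₃) (ha3 : G.Adj v₃ v₄) (ha4 : G.Adj v₄ v₅)
    (hnd : ([v₁, v₂, v₃, v₄, v₅] : List V).Nodup)
    (hd1 : G.degree v₁ = 3) (hd2 : G.degree v₂ = 4) (hd3 : G.degree v₃ = 4)
    (hd4 : G.degree v₄ = 4) (hd5 : G.degree v₅ = 3)
    (hind : ∃ σ' : List (V × ℕ),
      RecolSeqOn G L {u | u ≠ v₁ ∧ u ≠ v₂ ∧ u ≠ v₃ ∧ u ≠ v₄ ∧ u ≠ v₅} α σ' ∧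
      (∀ u, u ≠ v₁ → u ≠ v₂ → u ≠ v₃ → u ≠ v₄ → u ≠ v₅ →
        applySteps α σ' u = β u) ∧
      ∀ u, recolors σ' u ≤ 30) :
    ∃ σ : List (V × ℕ),
      RecolSeqOn G L Set.univ α σ ∧
      applySteps α σ = β ∧
      ∀ u, recolors σ u ≤ 30 := by
  classical
  obtain ⟨σ', ⟨hsteps, hprop⟩, hend, hcnt⟩ := hind
  have hnd' : v₁ ≠ v₂ ∧ v₁ ≠ v₃ ∧ v₁ ≠ v₄ ∧ v₁ ≠ v₅ ∧ v₂ ≠ v₃ ∧ v₂ ≠ v₄ ∧ v₂ ≠ v₅ ∧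
      v₃ ≠ v₄ ∧ v₃ ≠ v₅ ∧ v₄ ≠ v₅ := by
    simp only [List.nodup_cons, List.mem_cons, List.not_mem_nil, or_false, not_or,
      List.nodup_nil, and_true, List.mem_singleton] at hnd
    tauto
  obtain ⟨h12, h13, h14, h15, h23, h24, h25, h34, h35, h45⟩ := hnd'
  set s0 : Set V := {u | u ≠ v₁ ∧ u ≠ v₂ ∧ u ≠ v₃ ∧ u ≠ v₄ ∧ u ≠ v₅} with hs0def
  have hαp : ∀ (t : Set V), ProperOn G L t α :=
    fun t => ⟨fun u _ => hα.1 u (Set.mem_univ u),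
      fun a _ b _ hab => hα.2 a (Set.mem_univ a) b (Set.mem_univ b) hab⟩
  have hβL : ∀ x, β x ∈ L x := fun x => hβ.1 x (Set.mem_univ x)
  have hβadj' : ∀ x y, G.Adj x y → β x ≠ β y :=
    fun x y h => hβ.2 x (Set.mem_univ x) y (Set.mem_univ y) h
  have hend0 : ∀ u ∈ s0, applySteps α σ' u = β u :=
    fun u hu => hend u hu.1 hu.2.1 hu.2.2.1 hu.2.2.2.1 hu.2.2.2.2
  -- ==== Step 1 : insert v₃ ====
  set T3 : Finset V := G.neighborFinset v₃ \ {v₂, v₄} with hT3def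
  have hsub3 : ({v₂, v₄} : Finset V) ⊆ G.neighborFinset v₃ := by
    intro x hx
    rcases Finset.mem_insert.1 hx with h | h
    · rw [h]; exact (G.mem_neighborFinset _ _).2 ha2.symm
    · rw [Finset.mem_singleton.1 h]; exact (G.mem_neighborFinset _ _).2 ha3
  have hT3card : T3.card = 2 := by
    rw [hT3def, Finset.card_sdiff_of_subset hsub3, SimpleGraph.card_neighborFinset_eq_degree, hd3,
      Finset.card_pair h24]
  have hcard3 : T3.card + 4 + 1 ≤ (L v₃).card := by rw [hT3card, hL]
  have hT3 : ∀ u ∈ s0, G.Adj v₃ u → u ∈ T3 := by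
    intro u hu hadj
    refine Finset.mem_sdiff.2 ⟨(G.mem_neighborFinset _ _).2 hadj, ?_⟩
    simp only [Finset.mem_insert, Finset.mem_singleton]
    push_neg
    exact ⟨hu.2.1, hu.2.2.2.1⟩
  have hv3 : v₃ ∉ s0 := fun h => h.2.2.1 rfl
  obtain ⟨σ1, A1s, A1p, A1e, A1c, A1b⟩ :=
    insert_one G L β s0 v₃ hv3 4 (by norm_num) T3 hT3 hcard3 α σ' (hαp _) hsteps hprop
      (hβL v₃) (fun u _ h => hβadj' v₃ u h) hend0
  have hsum3 : ∑ u ∈ T3, recolors σ' u ≤ 60 := by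
    have h := Finset.sum_le_card_nsmul T3 (fun u => recolors σ' u) 30 (fun x _ => hcnt x)
    rw [hT3card] at h
    simpa using h
  have r3le : recolors σ1 v₃ ≤ 16 := by omega
  -- ==== Step 2 : insert v₂ ====
  have hv2 : v₂ ∉ insert v₃ s0 := by
    intro h
    rcases Set.mem_insert_iff.1 h with h' | h'
    · exact h23 h'
    · exact h'.2.1 rfl
  set T2 : Finset V := G.neighborFinset v₂ \ {v₁, v₅} with hT2def
  have hT2 : ∀ u ∈ insert v₃ s0, G.Adj v₂ u → u ∈ T2 := by
    intro u hu hadj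
    refine Finset.mem_sdiff.2 ⟨(G.mem_neighborFinset _ _).2 hadj, ?_⟩
    simp only [Finset.mem_insert, Finset.mem_singleton]
    push_neg
    rcases Set.mem_insert_iff.1 hu with h' | h'
    · rw [h']; exact ⟨Ne.symm h13, h35⟩
    · exact ⟨h'.1, h'.2.2.2.2⟩
  have hT2card : T2.card ≤ 3 := by
    have hsub : T2 ⊆ G.neighborFinset v₂ \ {v₁} := by
      refine Finset.sdiff_subset_sdiff (le_refl _) ?_
      intro x hx
      rw [Finset.mem_singleton.1 hx]
      exact Finset.mem_insert_self _ _
    have h1 := Finset.card_le_card hsub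
    have h2 : (G.neighborFinset v₂ \ {v₁}).card = 3 := by
      rw [Finset.card_sdiff_of_subset (by
        intro x hx
        rw [Finset.mem_singleton.1 hx]
        exact (G.mem_neighborFinset _ _).2 ha1.symm),
        SimpleGraph.card_neighborFinset_eq_degree, hd2, Finset.card_singleton]
    omega
  have hcard2 : T2.card + 3 + 1 ≤ (L v₂).card := by rw [hL]; omega
  obtain ⟨σ2, A2s, A2p, A2e, A2c, A2b⟩ :=
    insert_one G L β (insert v₃ s0) v₂ hv2 3 (by norm_num) T2 hT2 hcard2 α σ1 (hαp _) A1s A1p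
      (hβL v₂) (fun u _ h => hβadj' v₂ u h) A1e
  have hv3T2 : v₃ ∈ T2 := by
    refine Finset.mem_sdiff.2 ⟨(G.mem_neighborFinset _ _).2 ha2, ?_⟩
    simp only [Finset.mem_insert, Finset.mem_singleton]
    push_neg
    exact ⟨Ne.symm h13, h35⟩
  have hsum2 : ∑ u ∈ T2, recolors σ1 u ≤ 76 := by
    rw [← Finset.add_sum_erase _ _ hv3T2]
    have he : ∑ u ∈ T2.erase v₃, recolors σ1 u ≤ (T2.erase v₃).card • 30 := by
      refine Finset.sum_le_card_nsmul _ _ _ ?_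
      intro x hx
      rw [A1c x (Finset.mem_erase.1 hx).1]
      exact hcnt x
    have hc : (T2.erase v₃).card ≤ 2 := by
      rw [Finset.card_erase_of_mem hv3T2]; omega
    have he2 : ∑ u ∈ T2.erase v₃, recolors σ1 u ≤ 60 := by
      refine le_trans he ?_
      simp only [smul_eq_mul]
      omega
    omega
  have r2le : recolors σ2 v₂ ≤ 27 := by omega
  -- ==== Step 3 : insert v₄ ====
  have hv4 : v₄ ∉ insert v₂ (insert v₃ s0) := by
    intro h
    rcases Set.mem_insert_iff.1 h with h' | h'
    · exact h24 h'.symm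
    rcases Set.mem_insert_iff.1 h' with h'' | h''
    · exact h34 h''.symm
    · exact h''.2.2.2.1 rfl
  set T4 : Finset V := G.neighborFinset v₄ \ {v₁, v₅} with hT4def
  have hT4 : ∀ u ∈ insert v₂ (insert v₃ s0), G.Adj v₄ u → u ∈ T4 := by
    intro u hu hadj
    refine Finset.mem_sdiff.2 ⟨(G.mem_neighborFinset _ _).2 hadj, ?_⟩
    simp only [Finset.mem_insert, Finset.mem_singleton]
    push_neg
    rcases Set.mem_insert_iff.1 hu with h' | h'
    · rw [h']; exact ⟨Ne.symm h12, h25⟩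
    rcases Set.mem_insert_iff.1 h' with h'' | h''
    · rw [h'']; exact ⟨Ne.symm h13, h35⟩
    · exact ⟨h''.1, h''.2.2.2.2⟩
  have hT4card : T4.card ≤ 3 := by
    have hsub : T4 ⊆ G.neighborFinset v₄ \ {v₅} := by
      refine Finset.sdiff_subset_sdiff (le_refl _) ?_
      intro x hx
      rw [Finset.mem_singleton.1 hx]
      exact Finset.mem_insert_of_mem (Finset.mem_singleton_self _)
    have h1 := Finset.card_le_card hsub
    have h2 : (G.neighborFinset v₄ \ {v₅}).card = 3 := by
      rw [Finset.card_sdiff_of_subset (by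
        intro x hx
        rw [Finset.mem_singleton.1 hx]
        exact (G.mem_neighborFinset _ _).2 ha4),
        SimpleGraph.card_neighborFinset_eq_degree, hd4, Finset.card_singleton]
    omega
  have hcard4 : T4.card + 3 + 1 ≤ (L v₄).card := by rw [hL]; omega
  obtain ⟨σ3, A3s, A3p, A3e, A3c, A3b⟩ :=
    insert_one G L β (insert v₂ (insert v₃ s0)) v₄ hv4 3 (by norm_num) T4 hT4 hcard4 α σ2
      (hαp _) A2s A2p (hβL v₄) (fun u _ h => hβadj' v₄ u h) A2e
  have hv3T4 : v₃ ∈ T4 := by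
    refine Finset.mem_sdiff.2 ⟨(G.mem_neighborFinset _ _).2 ha3.symm, ?_⟩
    simp only [Finset.mem_insert, Finset.mem_singleton]
    push_neg
    exact ⟨Ne.symm h13, h35⟩
  have h30a : ∀ u, u ≠ v₃ → recolors σ2 u ≤ 30 := by
    intro u hu
    by_cases h2' : u = v₂
    · subst h2'; omega
    · rw [A2c u h2', A1c u hu]; exact hcnt u
  have hsum4 : ∑ u ∈ T4, recolors σ2 u ≤ 76 := by
    rw [← Finset.add_sum_erase _ _ hv3T4]
    have hhead : recolors σ2 v₃ ≤ 16 := by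
      rw [A2c v₃ (Ne.symm h23)]; exact r3le
    have he : ∑ u ∈ T4.erase v₃, recolors σ2 u ≤ (T4.erase v₃).card • 30 := by
      refine Finset.sum_le_card_nsmul _ _ _ ?_
      intro x hx
      exact h30a x (Finset.mem_erase.1 hx).1
    have hc : (T4.erase v₃).card ≤ 2 := by
      rw [Finset.card_erase_of_mem hv3T4]; omega
    have he2 : ∑ u ∈ T4.erase v₃, recolors σ2 u ≤ 60 := by
      refine le_trans he ?_
      simp only [smul_eq_mul]
      omega
    omega
  have r4le : recolors σ3 v₄ ≤ 27 := by omega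
  -- ==== Step 4 : insert v₁ ====
  have hv1 : v₁ ∉ insert v₄ (insert v₂ (insert v₃ s0)) := by
    intro h
    rcases Set.mem_insert_iff.1 h with h' | h'
    · exact h14 h'
    rcases Set.mem_insert_iff.1 h' with h'' | h''
    · exact h12 h''
    rcases Set.mem_insert_iff.1 h'' with h3' | h3'
    · exact h13 h3'
    · exact h3'.1 rfl
  set T1 : Finset V := G.neighborFinset v₁ \ {v₅} with hT1def
  have hT1 : ∀ u ∈ insert v₄ (insert v₂ (insert v₃ s0)), G.Adj v₁ u → u ∈ T1 := by
    intro u hu hadj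
    refine Finset.mem_sdiff.2 ⟨(G.mem_neighborFinset _ _).2 hadj, ?_⟩
    rw [Finset.mem_singleton]
    rcases Set.mem_insert_iff.1 hu with h' | h'
    · rw [h']; exact h45
    rcases Set.mem_insert_iff.1 h' with h'' | h''
    · rw [h'']; exact h25
    rcases Set.mem_insert_iff.1 h'' with h3' | h3'
    · rw [h3']; exact h35
    · exact h3'.2.2.2.2
  have hT1card : T1.card ≤ 3 := by
    have h1 := Finset.card_le_card (Finset.sdiff_subset (s := G.neighborFinset v₁) (t := {v₅}))
    rw [SimpleGraph.card_neighborFinset_eq_degree, hd1] at h1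
    exact h1
  have hcard1 : T1.card + 3 + 1 ≤ (L v₁).card := by rw [hL]; omega
  obtain ⟨σ4, A4s, A4p, A4e, A4c, A4b⟩ :=
    insert_one G L β (insert v₄ (insert v₂ (insert v₃ s0))) v₁ hv1 3 (by norm_num) T1 hT1 hcard1
      α σ3 (hαp _) A3s A3p (hβL v₁) (fun u _ h => hβadj' v₁ u h) A3e
  have hv2T1 : v₂ ∈ T1 := by
    refine Finset.mem_sdiff.2 ⟨(G.mem_neighborFinset _ _).2 ha1, ?_⟩
    rw [Finset.mem_singleton]; exact h25
  have h30b : ∀ u, u ≠ v₂ → recolors σ3 u ≤ 30 := by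
    intro u hu
    by_cases h4' : u = v₄
    · subst h4'; omega
    · rw [A3c u h4']
      by_cases h3' : u = v₃
      · rw [h3', A2c v₃ (Ne.symm h23)]
        omega
      · rw [A2c u hu, A1c u h3']; exact hcnt u
  have hsum1 : ∑ u ∈ T1, recolors σ3 u ≤ 87 := by
    rw [← Finset.add_sum_erase _ _ hv2T1]
    have hhead : recolors σ3 v₂ ≤ 27 := by
      rw [A3c v₂ h24]; exact r2le
    have he : ∑ u ∈ T1.erase v₂, recolors σ3 u ≤ (T1.erase v₂).card • 30 := by
      refine Finset.sum_le_card_nsmul _ _ _ ?_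
      intro x hx
      exact h30b x (Finset.mem_erase.1 hx).1
    have hc : (T1.erase v₂).card ≤ 2 := by
      rw [Finset.card_erase_of_mem hv2T1]; omega
    have he2 : ∑ u ∈ T1.erase v₂, recolors σ3 u ≤ 60 := by
      refine le_trans he ?_
      simp only [smul_eq_mul]
      omega
    omega
  have r1le : recolors σ4 v₁ ≤ 30 := by omega
  -- ==== Step 5 : insert v₅ ====
  have hv5 : v₅ ∉ insert v₁ (insert v₄ (insert v₂ (insert v₃ s0))) := by
    intro h
    rcases Set.mem_insert_iff.1 h with h' | h'
    · exact h15 h'.symm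
    rcases Set.mem_insert_iff.1 h' with h'' | h''
    · exact h45 h''.symm
    rcases Set.mem_insert_iff.1 h'' with h3' | h3'
    · exact h25 h3'.symm
    rcases Set.mem_insert_iff.1 h3' with h4' | h4'
    · exact h35 h4'.symm
    · exact h4'.2.2.2.2 rfl
  set T5 : Finset V := G.neighborFinset v₅ with hT5def
  have hT5 : ∀ u ∈ insert v₁ (insert v₄ (insert v₂ (insert v₃ s0))), G.Adj v₅ u → u ∈ T5 :=
    fun u _ hadj => (G.mem_neighborFinset _ _).2 hadj
  have hT5card : T5.card = 3 := by
    rw [hT5def, SimpleGraph.card_neighborFinset_eq_degree, hd5]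
  have hcard5 : T5.card + 3 + 1 ≤ (L v₅).card := by rw [hL, hT5card]
  obtain ⟨σ5, A5s, A5p, A5e, A5c, A5b⟩ :=
    insert_one G L β (insert v₁ (insert v₄ (insert v₂ (insert v₃ s0)))) v₅ hv5 3 (by norm_num)
      T5 hT5 hcard5 α σ4 (hαp _) A4s A4p (hβL v₅) (fun u _ h => hβadj' v₅ u h) A4e
  have hv4T5 : v₄ ∈ T5 := (G.mem_neighborFinset _ _).2 ha4.symm
  have h30c : ∀ u, u ≠ v₄ → recolors σ4 u ≤ 30 := by
    intro u hu
    by_cases h1' : u = v₁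
    · subst h1'; exact r1le
    · rw [A4c u h1']
      by_cases h2' : u = v₂
      · rw [h2', A3c v₂ h24]
        omega
      · exact h30b u h2'
  have hsum5 : ∑ u ∈ T5, recolors σ4 u ≤ 87 := by
    rw [← Finset.add_sum_erase _ _ hv4T5]
    have hhead : recolors σ4 v₄ ≤ 27 := by
      rw [A4c v₄ (Ne.symm h14)]; exact r4le
    have he : ∑ u ∈ T5.erase v₄, recolors σ4 u ≤ (T5.erase v₄).card • 30 := by
      refine Finset.sum_le_card_nsmul _ _ _ ?_
      intro x hx
      exact h30c x (Finset.mem_erase.1 hx).1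
    have hc : (T5.erase v₄).card ≤ 2 := by
      rw [Finset.card_erase_of_mem hv4T5, hT5card]
    have he2 : ∑ u ∈ T5.erase v₄, recolors σ4 u ≤ 60 := by
      refine le_trans he ?_
      simp only [smul_eq_mul]
      omega
    omega
  have r5le : recolors σ5 v₅ ≤ 30 := by omega
  -- ==== conclusion ====
  have huniv : (insert v₅ (insert v₁ (insert v₄ (insert v₂ (insert v₃ s0)))) : Set V)
      = Set.univ := by
    ext u
    simp only [Set.mem_insert_iff, Set.mem_univ, iff_true, hs0def, Set.mem_setOf_eq]
    by_cases e1 : u = v₁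
    · tauto
    by_cases e2 : u = v₂
    · tauto
    by_cases e3 : u = v₃
    · tauto
    by_cases e4 : u = v₄
    · tauto
    by_cases e5 : u = v₅
    · tauto
    · tauto
  refine ⟨σ5, ⟨fun q _ => Set.mem_univ _, fun n hn => ?_⟩, ?_, ?_⟩
  · have h := A5p n hn
    rwa [huniv] at h
  · funext u
    exact A5e u (by rw [huniv]; exact Set.mem_univ u)
  · intro u
    by_cases e5 : u = v₅
    · rw [e5]; exact r5le
    rw [A5c u e5]
    by_cases e1 : u = v₁
    · rw [e1]; exact r1le
    rw [A4c u e1]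
    by_cases e4 : u = v₄
    · rw [e4]; omega
    rw [A3c u e4]
    by_cases e2 : u = v₂
    · rw [e2]; omega
    rw [A2c u e2]
    by_cases e3 : u = v₃
    · rw [e3]; omega
    rw [A1c u e3]
    exact hcnt u
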